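/- arXiv:2509.08796 — 2 statements merged into one kernel-verified Lean document; each statement's English description precedes it below -/
import Mathlib

section
/- For a natural number n and subsets M, J of ℕ with M infinite and J finite nonempty, τ₁(M(J)) ≤ n if and only if J can be decomposed as J = J_1 ∪ ... ∪ J_m for some m ≤ n with J_1 < J_2 < ... < J_m and M(J_j) a Schreier set for each 1 ≤ j ≤ m. -/
/-- A Schreier set: a finite set `F` of naturals that is empty or satisfies `|F| ≤ min F`. -/
def IsSchreier (F : Finset ℕ) : Prop := ∀ h : F.Nonempty, F.card ≤ F.min' h

/-- `F < G` for finite sets of naturals: every element of `F` is below every element of `G`. -/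
def FinsetLT (F G : Finset ℕ) : Prop := ∀ a ∈ F, ∀ b ∈ G, a < b

/-- `A` can be covered by `m` consecutive Schreier sets `F 0 < F 1 < ⋯ < F (m-1)`. -/
def IsChainCover (A : Finset ℕ) (m : ℕ) : Prop :=
  ∃ F : Fin m → Finset ℕ, (∀ i, IsSchreier (F i)) ∧
    (∀ i j : Fin m, i < j → FinsetLT (F i) (F j)) ∧ ∀ a ∈ A, ∃ i, a ∈ F i

/-- The Schreier covering number `τ₁(A)`: the least number of consecutive Schreier sets
needed to cover the finite set `A` (with `τ₁(∅) = 0`). -/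
noncomputable def tau1 (A : Finset ℕ) : ℕ := sInf {m | IsChainCover A m}

/-- `M(J)`: the elements of the infinite set `M` whose index (position, counted from `0`,
in the increasing enumeration of `M`) belongs to the finite set `J`. -/
noncomputable def idxImage (M : Set ℕ) (J : Finset ℕ) : Finset ℕ :=
  J.image (Nat.nth (· ∈ M))

/-- The Gasparis–Leung index `GL₁(M,N) = sup {τ₁(M(J)) : J finite, N(J) ∈ S₁} ∈ ℕ ∪ {∞}`. -/
noncomputable def GL1 (M N : Set ℕ) : ℕ∞ :=
  ⨆ J ∈ {J : Finset ℕ | IsSchreier (idxImage N J)}, (tau1 (idxImage M J) : ℕ∞)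

lemma isSchreier_subset {F G : Finset ℕ} (h : G ⊆ F) (hF : IsSchreier F) : IsSchreier G := by
  intro hG
  have hFne : F.Nonempty := ⟨_, h (G.min'_mem hG)⟩
  calc G.card ≤ F.card := Finset.card_le_card h
    _ ≤ F.min' hFne := hF hFne
    _ ≤ G.min' hG := F.min'_le _ (h (G.min'_mem hG))

/-- For `M ⊆ {1,2,...}` infinite and `J` finite nonempty, `τ₁(M(J)) ≤ n` iff `J` decomposes as
`J = J 0 ∪ ⋯ ∪ J (m-1)` for some `m ≤ n` with `J 0 < ⋯ < J (m-1)` (consecutive) and each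
`M(J i)` a Schreier set. -/
theorem tau1_le_iff_decomposition (M : Set ℕ) (hM : M.Infinite) (hM0 : 0 ∉ M)
    (J : Finset ℕ) (hJ : J.Nonempty) (n : ℕ) :
    tau1 (idxImage M J) ≤ n ↔
      ∃ m ≤ n, ∃ Js : Fin m → Finset ℕ,
        (∀ i, IsSchreier (idxImage M (Js i))) ∧
        (∀ i j : Fin m, i < j → FinsetLT (Js i) (Js j)) ∧
        J = Finset.univ.biUnion Js := by
  have hM' : {x | x ∈ M}.Infinite := hM
  set A := idxImage M J with hA
  have hmemA : ∀ a ∈ A, a ∈ M ∧ 0 < a := by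
    intro a ha
    simp only [hA, idxImage, Finset.mem_image] at ha
    obtain ⟨j, _, rfl⟩ := ha
    have hm : Nat.nth (· ∈ M) j ∈ M := Nat.nth_mem_of_infinite hM' j
    exact ⟨hm, Nat.pos_of_ne_zero fun h0 => hM0 (h0 ▸ hm)⟩
  constructor
  · intro h
    -- the set of chain-cover sizes is nonempty: cover by singletons
    have hSne : {m | IsChainCover A m}.Nonempty := by
      refine ⟨A.card, fun i => {(A.orderIsoOfFin rfl i : ℕ)}, ?_, ?_, ?_⟩
      · intro i hne
        simp only [Finset.min'_singleton, Finset.card_singleton]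
        exact (hmemA _ (A.orderIsoOfFin rfl i).2).2
      · intro i j hij a ha b hb
        simp only [Finset.mem_singleton] at ha hb
        subst ha; subst hb
        exact (A.orderIsoOfFin rfl).lt_iff_lt.mpr hij
      · intro a ha
        refine ⟨(A.orderIsoOfFin rfl).symm ⟨a, ha⟩, ?_⟩
        simp
    have hmem : sInf {m | IsChainCover A m} ∈ {m | IsChainCover A m} := Nat.sInf_mem hSne
    obtain ⟨F, hSch, hLT, hCov⟩ := hmem
    refine ⟨_, h, fun i => J.filter (fun j => Nat.nth (· ∈ M) j ∈ F i), ?_, ?_, ?_⟩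
    · intro i
      refine isSchreier_subset (F := F i) ?_ (hSch i)
      intro a ha
      simp only [idxImage, Finset.mem_image, Finset.mem_filter] at ha
      obtain ⟨j, ⟨_, hj⟩, rfl⟩ := ha
      exact hj
    · intro i j hij a ha b hb
      simp only [Finset.mem_filter] at ha hb
      have := hLT i j hij _ ha.2 _ hb.2
      exact (Nat.nth_lt_nth hM').mp this
    · ext j
      simp only [Finset.mem_biUnion, Finset.mem_univ, Finset.mem_filter, true_and]
      constructor
      · intro hj
        obtain ⟨i, hi⟩ := hCov (Nat.nth (· ∈ M) j) (Finset.mem_image_of_mem _ hj)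
        exact ⟨i, hj, hi⟩
      · rintro ⟨i, hj, _⟩; exact hj
  · rintro ⟨m, hmn, Js, hSch, hLT, hJeq⟩
    have : IsChainCover A m := by
      refine ⟨fun i => idxImage M (Js i), hSch, ?_, ?_⟩
      · intro i j hij a ha b hb
        simp only [idxImage, Finset.mem_image] at ha hb
        obtain ⟨x, hx, rfl⟩ := ha
        obtain ⟨y, hy, rfl⟩ := hb
        exact (Nat.nth_lt_nth hM').mpr (hLT i j hij _ hx _ hy)
      · intro a ha
        simp only [hA, idxImage, Finset.mem_image] at ha
        obtain ⟨j, hj, rfl⟩ := ha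
        rw [hJeq] at hj
        simp only [Finset.mem_biUnion, Finset.mem_univ, true_and] at hj
        obtain ⟨i, hi⟩ := hj
        exact ⟨i, Finset.mem_image_of_mem _ hi⟩
    exact le_trans (Nat.sInf_le this) hmn
end

section
/- Let N = {n_1 < n_2 < ...} be an infinite subset of ℕ and let F be a finite subset of N with |F| = k. Then GL₁(N, N \ F) ≤ τ₁({n_1, ..., n_k}) + 1. -/
/-!
Let `k = |F|` and split a finite `J` by the rank `r(j) = #{j' ∈ J | j' < j} ≤ j` of its points.
The points of rank `< k` are covered as `{n_0, …, n_{k-1}}` is, after spreading `n_{r(j)}` up to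
`n_j`. The points `j` of rank `≥ k` satisfy `j ≥ min J + k`, and `(N \ F)_i ≤ n_{i+k}` because at
most `k` points of `N` were removed; so if `(N \ F)(J)` is Schreier, then
`n_j ≥ n_{min J + k} ≥ (N \ F)_{min J} ≥ |J|`, and these points form one more Schreier set.
-/

open Finset Nat

theorem isSchreier_iff {F : Finset ℕ} : IsSchreier F ↔ ∀ x ∈ F, #F ≤ x :=
  ⟨fun hF x hx => (hF ⟨x, hx⟩).trans (F.min'_le x hx), fun h hne => h _ (F.min'_mem hne)⟩

theorem IsSchreier.mono {F G : Finset ℕ} (hF : IsSchreier F) (hGF : G ⊆ F) : IsSchreier G :=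
  isSchreier_iff.2 fun x hx => (card_le_card hGF).trans (isSchreier_iff.1 hF x (hGF hx))

namespace IsChainCover

variable {A B : Finset ℕ} {m : ℕ}

theorem mono (h : IsChainCover A m) (hBA : B ⊆ A) : IsChainCover B m :=
  let ⟨G, hG, hlt, hcov⟩ := h
  ⟨G, hG, hlt, fun b hb => hcov b (hBA hb)⟩

/-- The pieces covering `A` may reach above `B`, so they are cut down to `A` first. -/
theorem union_isSchreier (h : IsChainCover A m) (hB : IsSchreier B) (hAB : FinsetLT A B) :
    IsChainCover (A ∪ B) (m + 1) := by
  obtain ⟨G, hG, hlt, hcov⟩ := h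
  refine ⟨Fin.snoc (fun i => G i ∩ A) B, fun i => ?_, fun i j hij => ?_, fun a ha => ?_⟩
  · induction i using Fin.lastCases with
    | last => simpa using hB
    | cast i => simpa using (hG i).mono inter_subset_left
  · induction j using Fin.lastCases with
    | last =>
      induction i using Fin.lastCases with
      | last => exact absurd hij (lt_irrefl _)
      | cast i =>
        simp only [Fin.snoc_castSucc, Fin.snoc_last]
        exact fun a ha b hb => hAB a (mem_inter.1 ha).2 b hb
    | cast j =>
      induction i using Fin.lastCases with
      | last => exact absurd hij (Fin.castSucc_lt_last j).not_gt
      | cast i =>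
        simp only [Fin.snoc_castSucc]
        exact fun a ha b hb =>
          hlt i j (Fin.castSucc_lt_castSucc_iff.1 hij) a (mem_inter.1 ha).1 b (mem_inter.1 hb).1
  · rcases mem_union.1 ha with ha | ha
    · obtain ⟨i, hi⟩ := hcov a ha
      exact ⟨i.castSucc, by simpa using ⟨hi, ha⟩⟩
    · exact ⟨Fin.last m, by simpa using ha⟩

/-- The spreading property of `τ₁`. -/
theorem image_of_le {ι : Type*} [LinearOrder ι] {S : Finset ι} {f g : ι → ℕ}
    (h : IsChainCover (S.image f) m) (hf : StrictMonoOn f S) (hg : StrictMonoOn g S)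
    (hfg : ∀ i ∈ S, f i ≤ g i) : IsChainCover (S.image g) m := by
  classical
  obtain ⟨G, hG, hlt, hcov⟩ := h
  refine ⟨fun i => (S.filter (f · ∈ G i)).image g, fun i => ?_, fun i j hij => ?_,
    fun x hx => ?_⟩
  · refine isSchreier_iff.2 fun x hx => ?_
    obtain ⟨s, hs, rfl⟩ := mem_image.1 hx
    rw [mem_filter] at hs
    calc #((S.filter (f · ∈ G i)).image g)
        ≤ #(S.filter (f · ∈ G i)) := card_image_le
      _ ≤ #(G i) := card_le_card_of_injOn f (fun s hs => (mem_filter.1 hs).2)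
          (hf.injOn.mono (filter_subset _ S))
      _ ≤ f s := isSchreier_iff.1 (hG i) _ hs.2
      _ ≤ g s := hfg s hs.1
  · intro x hx y hy
    obtain ⟨s, hs, rfl⟩ := mem_image.1 hx
    obtain ⟨t, ht, rfl⟩ := mem_image.1 hy
    rw [mem_filter] at hs ht
    have hst : s < t := (hf.lt_iff_lt hs.1 ht.1).1 (hlt i j hij _ hs.2 _ ht.2)
    exact hg hs.1 ht.1 hst
  · obtain ⟨s, hs, rfl⟩ := mem_image.1 hx
    obtain ⟨i, hi⟩ := hcov (f s) (mem_image_of_mem f hs)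
    exact ⟨i, mem_image_of_mem g (mem_filter.2 ⟨hs, hi⟩)⟩

end IsChainCover

theorem exists_isChainCover {A : Finset ℕ} (h0 : 0 ∉ A) : ∃ m, IsChainCover A m := by
  induction A using Finset.induction_on_max with
  | empty => exact ⟨0, fun i => i.elim0, fun i => i.elim0, fun i j => i.elim0, by simp⟩
  | insert a A ha ih =>
    obtain ⟨m, hm⟩ := ih fun h => h0 (mem_insert_of_mem h)
    have ha1 : 1 ≤ a := Nat.one_le_iff_ne_zero.2 fun h => h0 (h ▸ mem_insert_self a A)
    refine ⟨m + 1, ?_⟩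
    rw [insert_eq, union_comm]
    exact hm.union_isSchreier (isSchreier_iff.2 (by simpa using ha1))
      fun x hx y hy => (mem_singleton.1 hy) ▸ ha x hx

theorem tau1_le {A : Finset ℕ} {m : ℕ} (h : IsChainCover A m) : tau1 A ≤ m :=
  Nat.sInf_le h

theorem isChainCover_tau1 {A : Finset ℕ} (h0 : 0 ∉ A) : IsChainCover A (tau1 A) :=
  Nat.sInf_mem (exists_isChainCover h0)

theorem nth_diff_le_nth_add_card {s : Set ℕ} (hs : s.Infinite) (F : Finset ℕ) (i : ℕ) :
    nth (· ∈ s \ ↑F) i ≤ nth (· ∈ s) (i + #F) := by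
  classical
  set y := nth (· ∈ s) (i + #F) + 1
  have hcount : count (· ∈ s) y = i + #F + 1 := count_nth_succ_of_infinite (p := (· ∈ s)) hs _
  have hdiff : count (· ∈ s) y ≤ count (· ∈ s \ ↑F) y + #F := by
    simp only [count_eq_card_filter_range]
    refine (card_le_card fun x hx => ?_).trans (card_union_le _ F)
    by_cases hxF : x ∈ F
    · exact mem_union_right _ hxF
    · exact mem_union_left _ (by simp_all)
  have hi : i < count (· ∈ s \ ↑F) y := by omega
  have hsF : (s \ ↑F).Infinite := hs.sdiff F.finite_toSet
  exact Nat.lt_add_one_iff.1 ((lt_nth_iff_count_lt (p := (· ∈ s \ ↑F)) hsF).1 hi)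

theorem count_mem_le_sub_min' {J : Finset ℕ} (hJ : J.Nonempty) (j : ℕ) :
    count (· ∈ J) j ≤ j - J.min' hJ := by
  rw [count_eq_card_filter_range, ← Nat.card_Ico]
  exact card_le_card fun x hx => by
    simp only [mem_filter, mem_range] at hx
    exact mem_Ico.2 ⟨J.min'_le x hx.2, hx.1⟩

theorem isSchreier_image_nth_of_card_le_count {N : Set ℕ} (hN : N.Infinite) {F J : Finset ℕ}
    (hS : IsSchreier (idxImage (N \ ↑F) J)) :
    IsSchreier ((J.filter (#F ≤ count (· ∈ J) ·)).image (nth (· ∈ N))) := by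
  refine isSchreier_iff.2 fun x hx => ?_
  obtain ⟨j, hj, rfl⟩ := mem_image.1 hx
  rw [mem_filter] at hj
  have hJ : J.Nonempty := ⟨j, hj.1⟩
  have hmin : J.min' hJ + #F ≤ j := by
    have := count_mem_le_sub_min' hJ j
    have := J.min'_le j hj.1
    omega
  calc #((J.filter (#F ≤ count (· ∈ J) ·)).image (nth (· ∈ N)))
      ≤ #J := card_image_le.trans (card_filter_le _ _)
    _ = #(idxImage (N \ ↑F) J) :=
      (card_image_of_injective _ (nth_injective (hN.sdiff F.finite_toSet))).symm
    _ ≤ nth (· ∈ N \ ↑F) (J.min' hJ) :=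
      isSchreier_iff.1 hS _ (mem_image_of_mem _ (J.min'_mem hJ))
    _ ≤ nth (· ∈ N) (J.min' hJ + #F) := nth_diff_le_nth_add_card hN F _
    _ ≤ nth (· ∈ N) j := nth_monotone hN hmin

theorem tau1_idxImage_le {N : Set ℕ} (hN : N.Infinite) (hN0 : 0 ∉ N) {F J : Finset ℕ}
    (hS : IsSchreier (idxImage (N \ ↑F) J)) :
    tau1 (idxImage N J) ≤ tau1 (idxImage N (range #F)) + 1 := by
  set n := nth (· ∈ N)
  set rank := count (· ∈ J)
  have hn : StrictMono n := nth_strictMono hN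
  have hrank : StrictMonoOn rank J := fun i hi j _ hij => count_strict_mono hi hij
  have hlow : IsChainCover ((J.filter (rank · < #F)).image n) (tau1 (idxImage N (range #F))) := by
    have h0 : 0 ∉ idxImage N (range #F) := fun h => by
      obtain ⟨t, -, ht⟩ := mem_image.1 h
      exact hN0 (ht ▸ nth_mem_of_infinite hN t)
    have hcov : IsChainCover ((J.filter (rank · < #F)).image (n ∘ rank)) _ :=
      (isChainCover_tau1 h0).mono fun x hx => by
        obtain ⟨j, hj, rfl⟩ := mem_image.1 hx
        exact mem_image_of_mem n (mem_range.2 (mem_filter.1 hj).2)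
    exact hcov.image_of_le ((hn.comp_strictMonoOn hrank).mono (filter_subset _ J))
      (hn.strictMonoOn _) fun j _ => hn.monotone (count_le _)
  have hlt : FinsetLT ((J.filter (rank · < #F)).image n)
      ((J.filter (#F ≤ rank ·)).image n) := by
    intro x hx y hy
    obtain ⟨i, hi, rfl⟩ := mem_image.1 hx
    obtain ⟨j, hj, rfl⟩ := mem_image.1 hy
    rw [mem_filter] at hi hj
    exact hn (lt_of_not_ge fun hji => (hi.2.trans_le hj.2).not_ge (count_monotone _ hji))
  have hsplit : idxImage N J =
      (J.filter (rank · < #F)).image n ∪ (J.filter (#F ≤ rank ·)).image n := by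
    simp only [idxImage, ← image_union, ← not_lt, filter_union_filter_not_eq, n]
  rw [hsplit]
  exact tau1_le (hlow.union_isSchreier (isSchreier_image_nth_of_card_le_count hN hS) hlt)

theorem GL1_diff_le_general (N : Set ℕ) (hN : N.Infinite) (hN0 : 0 ∉ N)
    (F : Finset ℕ) :
    GL1 N (N \ ↑F) ≤ (tau1 (idxImage N (Finset.range F.card)) : ℕ∞) + 1 :=
  iSup₂_le fun _ hJ => by exact_mod_cast tau1_idxImage_le hN hN0 hJ

/-- For an infinite set `N = {n_1 < n_2 < ⋯} ⊆ {1,2,...}` and a finite subset `F` of `N`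
with `|F| = k`, one has `GL₁(N, N \ F) ≤ τ₁({n_1, …, n_k}) + 1`. -/
theorem GL1_diff_le (N : Set ℕ) (hN : N.Infinite) (hN0 : 0 ∉ N)
    (F : Finset ℕ) (hF : ↑F ⊆ N) :
    GL1 N (N \ ↑F) ≤ (tau1 (idxImage N (Finset.range F.card)) : ℕ∞) + 1 :=
  GL1_diff_le_general N hN hN0 F
end
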